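/- The total stored energy E(t) = (1/2)L'_dc·i_dc² + (1/2)L'_ac·i_ac² + (2C/N)(v_Σ² + v_Δ²) of the averaged MMC model is nonincreasing whenever the source voltage v_dc is zero, for any control signals d_dc, d_ac. -/

import Mathlib

/-- The total stored energy of the averaged MMC model is nonincreasing when v_dc = 0:
its derivative equals the negative resistive dissipation, which is ≤ 0. -/
theorem mmc_energy_nonincreasing
    (i_dc i_ac vSig vDel i_dc' i_ac' vSig' vDel' d_dc d_ac : ℝ → ℝ)
    (L_dc L_ac C N R_dc R_ac : ℝ)
    (hLdc : 0 < L_dc) (hLac : 0 < L_ac) (hC : 0 < C) (hN : 0 < N)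
    (hRdc : 0 < R_dc) (hRac : 0 < R_ac)
    (hdi_dc : ∀ t, HasDerivAt i_dc (i_dc' t) t)
    (hdi_ac : ∀ t, HasDerivAt i_ac (i_ac' t) t)
    (hdvSig : ∀ t, HasDerivAt vSig (vSig' t) t)
    (hdvDel : ∀ t, HasDerivAt vDel (vDel' t) t)
    (h1 : ∀ t, L_dc * i_dc' t = 0 - d_dc t * vSig t + d_ac t * vDel t - R_dc * i_dc t)
    (h2 : ∀ t, (4 * C / N) * vSig' t = d_dc t * i_dc t - d_ac t * i_ac t)
    (h3 : ∀ t, (4 * C / N) * vDel' t = d_dc t * i_ac t - d_ac t * i_dc t)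
    (h4 : ∀ t, L_ac * i_ac' t = -(d_dc t) * vDel t + d_ac t * vSig t - R_ac * i_ac t) :
    (∀ t, HasDerivAt
        (fun t => (1/2) * L_dc * (i_dc t) ^ 2 + (1/2) * L_ac * (i_ac t) ^ 2
          + (2 * C / N) * ((vSig t) ^ 2 + (vDel t) ^ 2))
        (-(R_dc * (i_dc t) ^ 2) - R_ac * (i_ac t) ^ 2) t)
    ∧ (∀ t, -(R_dc * (i_dc t) ^ 2) - R_ac * (i_ac t) ^ 2 ≤ 0) := by
  constructor
  · intro t
    have h5 : HasDerivAt (fun t => (1/2) * L_dc * (i_dc t) ^ 2)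
        ((1/2) * L_dc * (2 * i_dc t ^ 1 * i_dc' t)) t := ((hdi_dc t).pow 2).const_mul _
    have h6 : HasDerivAt (fun t => (1/2) * L_ac * (i_ac t) ^ 2)
        ((1/2) * L_ac * (2 * i_ac t ^ 1 * i_ac' t)) t := ((hdi_ac t).pow 2).const_mul _
    have h7 : HasDerivAt (fun t => (2 * C / N) * ((vSig t) ^ 2 + (vDel t) ^ 2))
        ((2 * C / N) * (2 * vSig t ^ 1 * vSig' t + 2 * vDel t ^ 1 * vDel' t)) t :=
      (((hdvSig t).pow 2).add ((hdvDel t).pow 2)).const_mul _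
    have hd := (h5.add h6).add h7
    refine hd.congr_deriv (Eq.symm ?_)
    have e1 := h1 t
    have e2 := h2 t
    have e3 := h3 t
    have e4 := h4 t
    linear_combination -(i_dc t * e1) - i_ac t * e4 - vSig t * e2 - vDel t * e3
  · intro t
    nlinarith [mul_nonneg hRdc.le (sq_nonneg (i_dc t)), mul_nonneg hRac.le (sq_nonneg (i_ac t))]
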